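/- arXiv:2311.08332 — 2 statements merged into one kernel-verified Lean document; each statement's English description precedes it below -/
import Mathlib

section
/- Let G = (V,E) be a finite graph and r* the rank function of the bond (cographic) matroid of G. Then the collection 𝒞 = {A ⊆ V : A is nonempty, r*(δ(A)) ≤ |A|, and no proper nonempty subset A' ⊊ A satisfies r*(δ(A')) ≤ |A'|} satisfies the circuit axioms of a matroid on ground set V. -/
/-- A finite undirected multigraph on vertex type `V` with edge type `E`:
each edge has an unordered pair of endpoints (possibly a loop). -/
structure Multigraph (V E : Type*) where
  ends : E → Sym2 V

namespace Multigraph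

variable {V E : Type*} (G : Multigraph V E)

/-- `δ(A)`: the set of edges incident to at least one vertex of `A`. -/
def inc (A : Set V) : Set E := {e | ∃ v ∈ A, v ∈ G.ends e}

/-- Number of connected components of the spanning subgraph of `G`
with edge set `B` (on the full vertex set `V`). -/
noncomputable def numComponentsEdges (B : Set E) : ℕ :=
  Nat.card (Quot (fun u v : V => ∃ e ∈ B, G.ends e = s(u, v)))

/-- Number of connected components `ω(S)` of the subgraph of `G` induced on `S`. -/
noncomputable def numComponentsSub (S : Set V) : ℕ :=
  Nat.card (Quot (fun x y : S => ∃ e, G.ends e = s(x.1, y.1)))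

/-- Rank function of the cycle (graphic) matroid of `G`:
`r(B) = |V| - (number of components of (V, B))`. -/
noncomputable def cycleRank (B : Set E) : ℕ :=
  Nat.card V - G.numComponentsEdges B

/-- Rank function `r*` of the bond (cographic) matroid of `G`:
`r*(B) = |B| + r(E - B) - r(E)`. -/
noncomputable def bondRank (B : Set E) : ℕ :=
  B.ncard + G.cycleRank Bᶜ - G.cycleRank Set.univ

/-- `G` is connected. -/
def Connected : Prop := G.numComponentsEdges Set.univ = 1

/-- `G` is 2-edge-connected: it is connected and deleting any single edge
leaves it connected. -/
def TwoEdgeConnected : Prop :=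
  G.Connected ∧ ∀ e : E, G.numComponentsEdges {e}ᶜ = 1

/-- `G` is 2-vertex-connected: it is connected and deleting any single vertex
leaves it connected. -/
def TwoVertexConnected : Prop :=
  G.Connected ∧ ∀ v : V, G.numComponentsSub {v}ᶜ = 1

/-- `G` has no loops. -/
def Loopless : Prop := ∀ e : E, ¬ (G.ends e).IsDiag

open Classical in
/-- The degree of a vertex, with loops counting twice. -/
noncomputable def degree [Fintype E] (v : V) : ℕ :=
  ∑ e : E, (if G.ends e = s(v, v) then 2 else if v ∈ G.ends e then 1 else 0)

/-- `G` is trivalent: every vertex has degree `3`. -/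
def Trivalent [Fintype E] : Prop := ∀ v : V, G.degree v = 3

/-- `A ⊆ V` is the vertex set of a cycle `v₁, …, vₙ, v₁` of `G`: there are
pairwise distinct vertices `f 0, …, f (n-1)` with range `A` and pairwise
distinct edges joining cyclically consecutive vertices. -/
def IsCycleSet (A : Set V) : Prop :=
  ∃ n : ℕ, 0 < n ∧ ∃ f : ZMod n → V, Function.Injective f ∧ Set.range f = A ∧
    ∃ e : ZMod n → E, Function.Injective e ∧ ∀ i, G.ends (e i) = s(f i, f (i + 1))

/-- The subgraph induced on `A` contains a cycle. -/
def Cyclic (A : Set V) : Prop := ∃ C ⊆ A, G.IsCycleSet C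

/-- The subgraph induced on `A` is acyclic (a forest). -/
def Acyclic (A : Set V) : Prop := ¬ G.Cyclic A

/-- `A` is a circuit of the graph curve matroid `M_G`: `A` is nonempty,
`r*(δ(A)) ≤ |A|`, and no proper nonempty subset `A'` satisfies `r*(δ(A')) ≤ |A'|`. -/
noncomputable def IsCircuitMG (A : Set V) : Prop :=
  A.Nonempty ∧ G.bondRank (G.inc A) ≤ A.ncard ∧
    ∀ A' : Set V, A' ⊂ A → A'.Nonempty → A'.ncard < G.bondRank (G.inc A')

/-- `A` is dependent in the graph curve matroid `M_G`, i.e. contains a circuit. -/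
noncomputable def DepMG (A : Set V) : Prop := ∃ C ⊆ A, G.IsCircuitMG C

/-- `A` is independent in the graph curve matroid `M_G`. -/
noncomputable def IndepMG (A : Set V) : Prop := ¬ G.DepMG A

/-- The rank function of the graph curve matroid `M_G`:
the maximal cardinality of an independent subset. -/
noncomputable def rankMG (A : Set V) : ℕ :=
  sSup {n | ∃ I ⊆ A, G.IndepMG I ∧ I.ncard = n}

/-- `B` is a basis of the graph curve matroid `M_G`:
a maximal independent set. -/
noncomputable def IsBasisMG (B : Set V) : Prop :=
  G.IndepMG B ∧ ∀ I : Set V, G.IndepMG I → B ⊆ I → I = B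

end Multigraph

/-!
Write `f A = r*(δ(A))`. Since `δ` turns unions into unions and `r*` is monotone and submodular,
`f` is monotone and submodular; submodularity of `r*` comes from supermodularity of the number of
components `κ` of `(V, B)`, which holds because adding one edge to a larger edge set merges at most
as many components as adding it to a smaller one. For minimal nonempty sets `C₁ ≠ C₂` with
`f Cᵢ ≤ |Cᵢ|`, sharing a vertex `v`, the set `C₁ ∩ C₂` is a proper nonempty subset of `C₁`, so
`f (C₁ ∩ C₂) > |C₁ ∩ C₂|`, and submodularity gives `f (C₁ ∪ C₂) < |C₁ ∪ C₂|`. Hence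
`D = (C₁ ∪ C₂) \ {v}` still satisfies `f D ≤ |D|`, and any minimal such subset of `D` is `C₃`.
-/

theorem equivalence_eq_or_sym2_eq {β : Type*} (p : Sym2 β) :
    Equivalence fun x y : β => x = y ∨ s(x, y) = p where
  refl _ := Or.inl rfl
  symm := by
    rintro x y (rfl | h)
    · exact Or.inl rfl
    · exact Or.inr (Sym2.eq_swap.trans h)
  trans := by
    rintro x y z (rfl | hxy) (rfl | hyz)
    · exact Or.inl rfl
    · exact Or.inr hyz
    · exact Or.inr hxy
    · exact Or.inl (Sym2.congr_left.mp (hxy.trans (hyz.symm.trans Sym2.eq_swap)))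

namespace Quot

variable {α : Type*} {r r' : α → α → Prop}

def addRel (r : α → α → Prop) (a b : α) (u v : α) : Prop := r u v ∨ s(u, v) = s(a, b)

theorem mk_eq_mk_of_le (h : r ≤ r') {x y : α} (hxy : Quot.mk r x = Quot.mk r y) :
    Quot.mk r' x = Quot.mk r' y :=
  congrArg (Quot.map id h) hxy

theorem card_le_card_of_le [Finite α] (h : r ≤ r') : Nat.card (Quot r') ≤ Nat.card (Quot r) :=
  Nat.card_le_card_of_surjective (Quot.map id h) fun q =>
    q.inductionOn fun x => ⟨Quot.mk r x, rfl⟩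

theorem le_addRel (a b : α) : r ≤ addRel r a b := fun _ _ => Or.inl

variable {a b : α}

theorem map_addRel_eq_map_iff {x y : Quot r} :
    Quot.map id (le_addRel a b) x = (Quot.map id (le_addRel a b) y : Quot (addRel r a b)) ↔
      x = y ∨ s(x, y) = s(Quot.mk r a, Quot.mk r b) := by
  induction x using Quot.ind with | mk u =>
  induction y using Quot.ind with | mk v =>
  constructor
  · intro h
    have heqv := (equivalence_eq_or_sym2_eq s(Quot.mk r a, Quot.mk r b)).comap (Quot.mk r)
    refine heqv.eqvGen_iff.mp (Relation.EqvGen.mono ?_ _ _ (Quot.eqvGen_exact h))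
    rintro x y (hxy | hxy)
    · exact Or.inl (Quot.sound hxy)
    · exact Or.inr (congrArg (Sym2.map (Quot.mk r)) hxy)
  · rintro (h | h)
    · exact congrArg _ h
    · have hab : Quot.mk (addRel r a b) a = Quot.mk (addRel r a b) b := Quot.sound (Or.inr rfl)
      have h' := congrArg (Sym2.map (Quot.map id (le_addRel a b))) h
      rw [Sym2.map_mk, Sym2.map_mk] at h'
      rw [← Sym2.mk_isDiag_iff]
      exact h' ▸ Sym2.mk_isDiag_iff.mpr hab

theorem map_addRel_surjective :
    Function.Surjective (Quot.map id (le_addRel a b) : Quot r → Quot (addRel r a b)) :=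
  fun q => q.inductionOn fun x => ⟨Quot.mk r x, rfl⟩

theorem card_addRel_of_mk_eq (h : Quot.mk r a = Quot.mk r b) :
    Nat.card (Quot (addRel r a b)) = Nat.card (Quot r) := by
  refine (Nat.card_eq_of_bijective _ ⟨fun x y hxy => ?_, map_addRel_surjective⟩).symm
  rcases map_addRel_eq_map_iff.mp hxy with hxy | hxy
  · exact hxy
  · rw [← Sym2.mk_isDiag_iff, hxy, h]
    exact Sym2.mk_isDiag_iff.mpr rfl

theorem card_addRel_add_one_of_mk_ne [Finite α] (h : Quot.mk r a ≠ Quot.mk r b) :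
    Nat.card (Quot (addRel r a b)) + 1 = Nat.card (Quot r) := by
  classical
  rw [← Nat.card_congr (Equiv.optionSubtypeNe (Quot.mk r b)), Finite.card_option]
  congr 1
  symm
  refine Nat.card_eq_of_bijective (fun x => Quot.map id (le_addRel a b) x.1) ⟨?_, fun q => ?_⟩
  · rintro ⟨x, hx⟩ ⟨y, hy⟩ hxy
    refine Subtype.ext ((map_addRel_eq_map_iff.mp hxy).resolve_right fun hs => ?_)
    rcases Sym2.eq_iff.mp hs with ⟨_, rfl⟩ | ⟨rfl, _⟩
    exacts [hy rfl, hx rfl]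
  · obtain ⟨x, rfl⟩ := map_addRel_surjective q
    by_cases hx : x = Quot.mk r b
    · exact ⟨⟨Quot.mk r a, h⟩, map_addRel_eq_map_iff.mpr (Or.inr (by rw [hx]))⟩
    · exact ⟨⟨x, hx⟩, rfl⟩

end Quot

section SubmodularCircuits

variable {α : Type*} [Finite α] {f : Set α → ℕ}

theorem exists_minimal_subset_union_sdiff_of_submodular (hmono : Monotone f)
    (hsub : ∀ A B, f (A ∪ B) + f (A ∩ B) ≤ f A + f B) {C₁ C₂ : Set α}
    (h₁ : Minimal (fun A => A.Nonempty ∧ f A ≤ A.ncard) C₁)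
    (h₂ : Minimal (fun A => A.Nonempty ∧ f A ≤ A.ncard) C₂) (hne : C₁ ≠ C₂) {v : α}
    (hv : v ∈ C₁ ∩ C₂) :
    ∃ C₃ ⊆ (C₁ ∪ C₂) \ {v}, Minimal (fun A => A.Nonempty ∧ f A ≤ A.ncard) C₃ := by
  obtain ⟨w, hw₁, hw₂⟩ : ∃ w ∈ C₁, w ∉ C₂ :=
    Set.not_subset.mp fun h => hne (h₂.eq_of_ge h₁.prop h).symm
  have hinter : C₁ ∩ C₂ ⊂ C₁ := Set.inter_subset_left.ssubset_of_not_subset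
    fun h => hw₂ (h hw₁).2
  have hf_inter : (C₁ ∩ C₂).ncard < f (C₁ ∩ C₂) :=
    lt_of_not_ge fun h => h₁.not_prop_of_ssubset hinter ⟨⟨v, hv⟩, h⟩
  have hcard := Set.ncard_union_add_ncard_inter C₁ C₂
  have hf_union : f (C₁ ∪ C₂) < (C₁ ∪ C₂).ncard := by
    have := hsub C₁ C₂
    have := h₁.prop.2
    have := h₂.prop.2
    omega
  have hD : ((C₁ ∪ C₂) \ {v}).Nonempty ∧ f ((C₁ ∪ C₂) \ {v}) ≤ ((C₁ ∪ C₂) \ {v}).ncard := by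
    refine ⟨⟨w, Or.inl hw₁, fun hwv => hw₂ ((Set.mem_singleton_iff.mp hwv) ▸ hv.2)⟩, ?_⟩
    have := hmono (Set.sdiff_subset (s := C₁ ∪ C₂) (t := {v}))
    rw [Set.ncard_sdiff_singleton_of_mem (Set.mem_union_left C₂ hv.1)]
    omega
  exact exists_minimal_le_of_wellFoundedLT _ _ hD

end SubmodularCircuits

namespace Multigraph

variable {V E : Type*} (G : Multigraph V E)

def edgeRel (B : Set E) (u v : V) : Prop := ∃ e ∈ B, G.ends e = s(u, v)

theorem numComponentsEdges_eq_card_quot (B : Set E) :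
    G.numComponentsEdges B = Nat.card (Quot (G.edgeRel B)) := rfl

variable {G}

theorem edgeRel_mono {B B' : Set E} (h : B ⊆ B') : G.edgeRel B ≤ G.edgeRel B' :=
  fun _ _ ⟨e, he, hends⟩ => ⟨e, h he, hends⟩

theorem edgeRel_insert {e : E} {a b : V} (he : G.ends e = s(a, b)) (B : Set E) :
    G.edgeRel (insert e B) = Quot.addRel (G.edgeRel B) a b := by
  funext u v
  simp only [edgeRel, Quot.addRel, Set.mem_insert_iff, or_and_right, exists_or, exists_eq_left, he,
    eq_comm (a := s(a, b)), or_comm]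

variable (G)

theorem inc_union (A B : Set V) : G.inc (A ∪ B) = G.inc A ∪ G.inc B := by
  ext e
  simp only [inc, Set.mem_union, Set.mem_ofPred_eq, or_and_right, exists_or]

theorem inc_mono : Monotone G.inc :=
  fun _ _ h _ ⟨v, hv, hve⟩ => ⟨v, h hv, hve⟩

theorem inc_inter_subset (A B : Set V) : G.inc (A ∩ B) ⊆ G.inc A ∩ G.inc B :=
  G.inc_mono.map_inf_le A B

variable [Finite V]

theorem numComponentsEdges_antitone : Antitone G.numComponentsEdges :=
  fun _ _ h => Quot.card_le_card_of_le (edgeRel_mono h)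

theorem numComponentsEdges_le_card (B : Set E) : G.numComponentsEdges B ≤ Nat.card V :=
  Nat.card_le_card_of_surjective _ Quot.mk_surjective

theorem numComponentsEdges_le_insert_add_one (e : E) (B : Set E) :
    G.numComponentsEdges B ≤ G.numComponentsEdges (insert e B) + 1 := by
  induction he : G.ends e using Sym2.ind with | h a b =>
  rw [numComponentsEdges_eq_card_quot, numComponentsEdges_eq_card_quot, edgeRel_insert he]
  by_cases hab : Quot.mk (G.edgeRel B) a = Quot.mk (G.edgeRel B) b
  · rw [Quot.card_addRel_of_mk_eq hab]
    omega
  · rw [← Quot.card_addRel_add_one_of_mk_ne hab]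

theorem numComponentsEdges_add_insert_le {A B : Set E} (h : B ⊆ A) (e : E) :
    G.numComponentsEdges A + G.numComponentsEdges (insert e B) ≤
      G.numComponentsEdges (insert e A) + G.numComponentsEdges B := by
  induction he : G.ends e using Sym2.ind with | h a b =>
  simp only [numComponentsEdges_eq_card_quot, edgeRel_insert he]
  by_cases hA : Quot.mk (G.edgeRel A) a = Quot.mk (G.edgeRel A) b
  · rw [Quot.card_addRel_of_mk_eq hA]
    have := Quot.card_le_card_of_le (Quot.le_addRel (r := G.edgeRel B) a b)
    omega
  · have hB : Quot.mk (G.edgeRel B) a ≠ Quot.mk (G.edgeRel B) b :=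
      fun hB => hA (Quot.mk_eq_mk_of_le (edgeRel_mono h) hB)
    rw [← Quot.card_addRel_add_one_of_mk_ne hA, ← Quot.card_addRel_add_one_of_mk_ne hB]
    omega

variable [Finite E]

theorem numComponentsEdges_le_union_add_ncard (X S : Set E) :
    G.numComponentsEdges X ≤ G.numComponentsEdges (X ∪ S) + S.ncard := by
  induction S, S.toFinite using Set.Finite.induction_on with
  | empty => simp
  | @insert e S he _ ih =>
    rw [Set.union_insert, Set.ncard_insert_of_notMem he]
    have := G.numComponentsEdges_le_insert_add_one e (X ∪ S)
    omega

theorem numComponentsEdges_add_union_le {A B : Set E} (h : B ⊆ A) (S : Set E) :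
    G.numComponentsEdges A + G.numComponentsEdges (B ∪ S) ≤
      G.numComponentsEdges (A ∪ S) + G.numComponentsEdges B := by
  induction S, S.toFinite using Set.Finite.induction_on with
  | empty => simp
  | @insert e S _ _ ih =>
    rw [Set.union_insert, Set.union_insert]
    have := G.numComponentsEdges_add_insert_le (Set.union_subset_union_left S h) e
    omega

theorem numComponentsEdges_add_le_union_add_inter (P Q : Set E) :
    G.numComponentsEdges P + G.numComponentsEdges Q ≤
      G.numComponentsEdges (P ∪ Q) + G.numComponentsEdges (P ∩ Q) := by
  have := G.numComponentsEdges_add_union_le (Set.inter_subset_left (s := P) (t := Q)) Q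
  rwa [Set.union_eq_right.mpr Set.inter_subset_right] at this

theorem bondRank_add_numComponentsEdges_compl (B : Set E) :
    G.bondRank B + G.numComponentsEdges Bᶜ = B.ncard + G.numComponentsEdges Set.univ := by
  have h₁ := G.numComponentsEdges_le_card Bᶜ
  have h₂ := G.numComponentsEdges_antitone (Set.subset_univ Bᶜ)
  have h₃ := G.numComponentsEdges_le_union_add_ncard Bᶜ B
  rw [Set.compl_union_self] at h₃
  unfold bondRank cycleRank
  omega

theorem bondRank_mono : Monotone G.bondRank := by
  intro X Y h
  have hX := G.bondRank_add_numComponentsEdges_compl X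
  have hY := G.bondRank_add_numComponentsEdges_compl Y
  have hcompl := G.numComponentsEdges_le_union_add_ncard Yᶜ (Xᶜ \ Yᶜ)
  rw [Set.union_sdiff_cancel (Set.compl_subset_compl.mpr h), compl_sdiff_compl] at hcompl
  have hcard := Set.ncard_sdiff_add_ncard_of_subset h
  omega

theorem bondRank_union_add_inter_le (X Y : Set E) :
    G.bondRank (X ∪ Y) + G.bondRank (X ∩ Y) ≤ G.bondRank X + G.bondRank Y := by
  have hX := G.bondRank_add_numComponentsEdges_compl X
  have hY := G.bondRank_add_numComponentsEdges_compl Y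
  have hU := G.bondRank_add_numComponentsEdges_compl (X ∪ Y)
  have hI := G.bondRank_add_numComponentsEdges_compl (X ∩ Y)
  have hκ := G.numComponentsEdges_add_le_union_add_inter Xᶜ Yᶜ
  rw [← Set.compl_inter, ← Set.compl_union] at hκ
  have hcard := Set.ncard_union_add_ncard_inter X Y
  omega

theorem bondRank_inc_mono : Monotone fun A => G.bondRank (G.inc A) :=
  G.bondRank_mono.comp G.inc_mono

theorem bondRank_inc_union_add_inter_le (A B : Set V) :
    G.bondRank (G.inc (A ∪ B)) + G.bondRank (G.inc (A ∩ B)) ≤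
      G.bondRank (G.inc A) + G.bondRank (G.inc B) := by
  have := G.bondRank_mono (G.inc_inter_subset A B)
  rw [inc_union]
  have := G.bondRank_union_add_inter_le (G.inc A) (G.inc B)
  omega

end Multigraph

/-- The collection
`𝒞 = {A ⊆ V : A ≠ ∅, r*(δ(A)) ≤ |A|, and no proper nonempty subset A' ⊊ A
has r*(δ(A')) ≤ |A'|}` satisfies the circuit axioms of a matroid on `V`:
(C1) `∅ ∉ 𝒞`; (C2) no member of `𝒞` is properly contained in another;
(C3) circuit elimination. -/
theorem circuit_axioms_graph_curve_matroid {V E : Type*} [Fintype V] [Fintype E]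
    (G : Multigraph V E)
    (𝒞 : Set (Set V))
    (h𝒞 : 𝒞 = {A : Set V | A.Nonempty ∧ G.bondRank (G.inc A) ≤ A.ncard ∧
      ∀ A' : Set V, A' ⊂ A → A'.Nonempty → ¬ (G.bondRank (G.inc A') ≤ A'.ncard)}) :
    (∅ ∉ 𝒞) ∧
    (∀ C₁ ∈ 𝒞, ∀ C₂ ∈ 𝒞, C₁ ⊆ C₂ → C₁ = C₂) ∧
    (∀ C₁ ∈ 𝒞, ∀ C₂ ∈ 𝒞, C₁ ≠ C₂ → ∀ v ∈ C₁ ∩ C₂,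
      ∃ C₃ ∈ 𝒞, C₃ ⊆ (C₁ ∪ C₂) \ {v}) := by
  have h𝒞_minimal (A : Set V) :
      A ∈ 𝒞 ↔ Minimal (fun A : Set V => A.Nonempty ∧ G.bondRank (G.inc A) ≤ A.ncard) A := by
    simp only [h𝒞, Set.mem_ofPred_eq, Set.minimal_iff_forall_ssubset, not_and, and_assoc]
  simp only [h𝒞_minimal]
  refine ⟨fun h => Set.not_nonempty_empty h.prop.1,
    fun C₁ h₁ C₂ h₂ h => (h₂.eq_of_ge h₁.prop h).symm, fun C₁ h₁ C₂ h₂ hne v hv => ?_⟩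
  obtain ⟨C₃, hC₃, h₃⟩ := exists_minimal_subset_union_sdiff_of_submodular
    G.bondRank_inc_mono G.bondRank_inc_union_add_inter_le h₁ h₂ hne hv
  exact ⟨C₃, h₃, hC₃⟩
end

section
/- Let G be a trivalent, 2-edge-connected finite graph. An inclusion-minimal cycle A ⊆ V(G) is a circuit of the graph curve matroid M_G if and only if removing A does not disconnect G, i.e., G[V−A] is connected (or empty). -/
/-!
Write `ω(S)` for the number of components of `G[S]` and `E(S)` for the set of edges inside `S`.
In a connected trivalent graph `3|S| = |δ(S)| + |E(S)|`, and deleting `δ(S)` isolates the vertices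
of `S`; hence `r*(δ(S)) = 2|S| - |E(S)| - ω(V - S) + 1`, and `r*(δ(S)) ≤ |S|` exactly when
`|S| + 1 ≤ |E(S)| + ω(V - S)`.

A minimal cycle `A` is chordless. If `G - A` is connected or empty, `r*(δ(A)) ≤ |A|` comes from the
`|A|` cycle edges plus one component, or, when `A = V`, from `2|E| = 3|V|`. For a proper nonempty
`A' ⊂ A` the edges inside `A'` are cycle edges, and every component of `G - A'` contains the vertex
following an exit of the cycle from `A'` (a vertex of `A` reaches `G - A` through its third edge);
these two counts add up to `|A'|`, so `|A'| < r*(δ(A'))`. Conversely, if `G - A` is disconnected,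
`A' = A - {v}` keeps `|A| - 2` cycle edges and `ω(G - A') ≥ ω(G - A) ≥ 2`, because `v` has a
single neighbour off the cycle, so `r*(δ(A')) ≤ |A'|` and `A` is not a circuit. A cycle of length
one is a loop whose vertex hangs on a bridge, which 2-edge-connectivity excludes.
-/

theorem ZMod.natCast_inj_of_lt {n a b : ℕ} (h : (a : ZMod n) = b) (ha : a < n) (hb : b < n) :
    a = b := by
  simpa [ZMod.val_natCast_of_lt ha, ZMod.val_natCast_of_lt hb] using congrArg ZMod.val h

theorem ZMod.exists_exit_eq {n : ℕ} [NeZero n] {p : ZMod n → Prop} {α : Sort*}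
    (c : ∀ i, ¬ p i → α) (hc : ∀ i (hi : ¬ p i) (hi' : ¬ p (i + 1)), c i hi = c (i + 1) hi')
    {i₀ : ZMod n} (hi₀ : p i₀) (j : ZMod n) (hj : ¬ p j) :
    ∃ i, ∃ (_ : p i) (hi' : ¬ p (i + 1)), c (i + 1) hi' = c j hj := by
  suffices h : ∀ k : ℕ, ∀ j, j = i₀ + k → ∀ hj : ¬ p j,
      ∃ i, ∃ (_ : p i) (hi' : ¬ p (i + 1)), c (i + 1) hi' = c j hj from
    h (j - i₀).val j (by simp) hj
  intro k
  induction k with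
  | zero =>
    rintro j rfl hj
    exact absurd (by simpa using hi₀) hj
  | succ k ih =>
    intro j hjk hj
    obtain rfl : j = i₀ + k + 1 := by rw [hjk]; push_cast; ring
    by_cases hp : p (i₀ + k)
    · exact ⟨i₀ + k, hp, hj, rfl⟩
    · obtain ⟨i, hi, hi', h⟩ := ih _ rfl hp
      exact ⟨i, hi, hi', h.trans (hc _ hp hj)⟩

namespace Multigraph

open Function

variable {V E : Type*} (G : Multigraph V E)

def Adj (u v : V) : Prop := ∃ g, G.ends g = s(u, v)

def edgesWithin (S : Set V) : Set E := {g | ∀ x ∈ G.ends g, x ∈ S}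

abbrev Component (S : Set V) : Type _ := Quot fun x y : S => G.Adj x y

open Classical in
noncomputable def incidence (v : V) (g : E) : ℕ :=
  if G.ends g = s(v, v) then 2 else if v ∈ G.ends g then 1 else 0

variable {G}

theorem Adj.symm {u v : V} (h : G.Adj u v) : G.Adj v u := by
  obtain ⟨g, hg⟩ := h
  exact ⟨g, hg.trans Sym2.eq_swap⟩

theorem mem_inc_iff_of_ends {S : Set V} {g : E} {u w : V} (h : G.ends g = s(u, w)) :
    g ∈ G.inc S ↔ u ∈ S ∨ w ∈ S := by
  show (∃ v ∈ S, v ∈ G.ends g) ↔ _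
  simp only [h, Sym2.mem_iff]
  constructor
  · rintro ⟨v, hv, rfl | rfl⟩
    exacts [.inl hv, .inr hv]
  · rintro (hu | hw)
    exacts [⟨u, hu, .inl rfl⟩, ⟨w, hw, .inr rfl⟩]

theorem mem_edgesWithin_iff_of_ends {S : Set V} {g : E} {u w : V} (h : G.ends g = s(u, w)) :
    g ∈ G.edgesWithin S ↔ u ∈ S ∧ w ∈ S := by
  simp [edgesWithin, h]

theorem exists_ends_eq (g : E) : ∃ u w, G.ends g = s(u, w) :=
  Sym2.ind (fun u w => ⟨u, w, rfl⟩) (G.ends g)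

theorem numComponentsSub_eq_card (S : Set V) : G.numComponentsSub S = Nat.card (G.Component S) :=
  rfl

theorem numComponentsSub_empty : G.numComponentsSub ∅ = 0 := by
  simp [numComponentsSub_eq_card]

theorem component_mk_eq_of_subset {S T : Set V} (hST : S ⊆ T) {x y : S}
    (h : (Quot.mk _ x : G.Component S) = Quot.mk _ y) :
    (Quot.mk _ (Set.inclusion hST x) : G.Component T) = Quot.mk _ (Set.inclusion hST y) :=
  congrArg (Quot.map (ra := fun x y : S => G.Adj x y) (rb := fun x y : T => G.Adj x y)
    (Set.inclusion hST) fun _ _ => id) h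

theorem numComponentsEdges_ne_one {B : Set E} {S : Set V} (hS : S.Nonempty) (hSc : Sᶜ.Nonempty)
    (hB : ∀ g ∈ B, ∀ x y, G.ends g = s(x, y) → x ∈ S → y ∈ S) :
    G.numComponentsEdges B ≠ 1 := by
  intro h
  obtain ⟨x, hx⟩ := hS
  obtain ⟨y, hy⟩ := hSc
  have := (Nat.card_eq_one_iff_unique.mp h).1
  have hxy := congrArg (Quot.lift (· ∈ S) ?_)
    (Subsingleton.elim (Quot.mk (fun u v : V => ∃ g ∈ B, G.ends g = s(u, v)) x) (Quot.mk _ y))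
  · exact hy (cast hxy hx)
  · rintro u v ⟨g, hg, huv⟩
    exact propext ⟨hB g hg u v huv, hB g hg v u (huv.trans Sym2.eq_swap)⟩

theorem numComponentsEdges_compl_inc [Finite V] (S : Set V) :
    G.numComponentsEdges (G.inc S)ᶜ = S.ncard + G.numComponentsSub Sᶜ := by
  classical
  let r := fun u v : V => ∃ g ∈ (G.inc S)ᶜ, G.ends g = s(u, v)
  let φ : Quot r → S ⊕ G.Component Sᶜ := Quot.lift
    (fun v => if h : v ∈ S then .inl ⟨v, h⟩ else .inr (Quot.mk _ ⟨v, h⟩))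
    (by
      rintro u v ⟨g, hg, huv⟩
      rw [Set.mem_compl_iff, mem_inc_iff_of_ends huv, not_or] at hg
      simp only [dif_neg hg.1, dif_neg hg.2]
      exact congrArg _ (Quot.sound ⟨g, huv⟩))
  let ψ : S ⊕ G.Component Sᶜ → Quot r := Sum.elim (fun x => Quot.mk r x)
    (Quot.lift (fun x => Quot.mk r x) (by
      rintro x y ⟨g, hxy⟩
      refine Quot.sound ⟨g, ?_, hxy⟩
      rw [Set.mem_compl_iff, mem_inc_iff_of_ends hxy, not_or]
      exact ⟨x.2, y.2⟩))
  have hψφ : LeftInverse ψ φ := by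
    refine Quot.ind fun v => ?_
    by_cases h : v ∈ S <;> simp [φ, ψ, h]
  have hφψ : RightInverse ψ φ := by
    rintro (x | ⟨y⟩)
    · simp [φ, ψ, x.2]
    · induction y using Quot.ind with
      | _ y => simp [φ, ψ, show y.1 ∉ S from y.2]
  rw [numComponentsEdges, Nat.card_congr ⟨φ, ψ, hψφ, hφψ⟩, Nat.card_sum, Nat.card_coe_set_eq,
    numComponentsSub_eq_card]

theorem numComponentsSub_le_insert [Finite V] {S : Set V} {v : V}
    (hv : ∀ w₁ ∈ S, ∀ w₂ ∈ S, G.Adj v w₁ → G.Adj v w₂ → w₁ = w₂) :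
    G.numComponentsSub S ≤ G.numComponentsSub (insert v S) := by
  classical
  rcases S.eq_empty_or_nonempty with rfl | ⟨x₀, hx₀⟩
  · simp [numComponentsSub_empty]
  let target : G.Component S :=
    if h : ∃ w ∈ S, G.Adj v w then Quot.mk _ ⟨h.choose, h.choose_spec.1⟩ else Quot.mk _ ⟨x₀, hx₀⟩
  have htarget : ∀ w (hw : w ∈ S), G.Adj v w → target = Quot.mk _ ⟨w, hw⟩ := by
    intro w hw hvw
    have h : ∃ w ∈ S, G.Adj v w := ⟨w, hw, hvw⟩
    simp only [target, dif_pos h]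
    congr
    exact hv _ h.choose_spec.1 _ hw h.choose_spec.2 hvw
  let φ : G.Component (insert v S) → G.Component S := Quot.lift
    (fun x => if hx : x.1 ∈ S then Quot.mk _ ⟨x.1, hx⟩ else target)
    (by
      rintro ⟨x, hx⟩ ⟨y, hy⟩ hxy
      by_cases hxS : x ∈ S <;> by_cases hyS : y ∈ S
      · simp only [dif_pos hxS, dif_pos hyS]
        exact Quot.sound hxy
      · obtain rfl : y = v := (Set.mem_insert_iff.mp hy).resolve_right hyS
        simp only [dif_pos hxS, dif_neg hyS]
        exact (htarget x hxS hxy.symm).symm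
      · obtain rfl : x = v := (Set.mem_insert_iff.mp hx).resolve_right hxS
        simp only [dif_neg hxS, dif_pos hyS]
        exact htarget y hyS hxy
      · simp only [dif_neg hxS, dif_neg hyS])
  rw [numComponentsSub_eq_card, numComponentsSub_eq_card]
  refine Nat.card_le_card_of_surjective φ (Quot.ind fun x => ⟨Quot.mk _ ⟨x, .inr x.2⟩, ?_⟩)
  simp [φ, x.2]

theorem incidence_of_loop {v : V} {g : E} (h : G.ends g = s(v, v)) : G.incidence v g = 2 := by
  simp [incidence, h]

theorem incidence_of_not_loop {v : V} {g : E} (hv : v ∈ G.ends g) (h : G.ends g ≠ s(v, v)) :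
    G.incidence v g = 1 := by
  simp [incidence, h, hv]

theorem incidence_of_notMem {v : V} {g : E} (hv : v ∉ G.ends g) : G.incidence v g = 0 := by
  have h : G.ends g ≠ s(v, v) := fun h => hv (h ▸ Sym2.mem_mk_left v v)
  simp [incidence, h, hv]

theorem one_le_incidence {v : V} {g : E} (hv : v ∈ G.ends g) : 1 ≤ G.incidence v g := by
  unfold incidence
  split_ifs <;> omega

theorem incidence_of_ends [DecidableEq V] {v u w : V} {g : E} (h : G.ends g = s(u, w)) :
    G.incidence v g = (if v = u then 1 else 0) + (if v = w then 1 else 0) := by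
  rcases eq_or_ne v u with rfl | hu <;> rcases eq_or_ne v w with rfl | hw
  · simp [incidence_of_loop h]
  · rw [incidence_of_not_loop (by simp [h]) (by rw [h, Ne, Sym2.congr_right]; exact hw.symm)]
    simp [hw]
  · rw [incidence_of_not_loop (by simp [h]) (by rw [h, Ne, Sym2.congr_left]; exact hu.symm)]
    simp [hu]
  · rw [incidence_of_notMem (by rw [h, Sym2.mem_iff]; tauto)]
    simp [hu, hw]

section Degree

variable [Fintype E]

theorem degree_eq_sum_incidence (v : V) : G.degree v = ∑ g, G.incidence v g := rfl

theorem sum_incidence_le_degree (v : V) (t : Finset E) : ∑ g ∈ t, G.incidence v g ≤ G.degree v :=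
  Finset.sum_le_sum_of_subset t.subset_univ

theorem degree_eq_sum_incidence_of_subset {v : V} {t : Finset E}
    (ht : ∀ g, v ∈ G.ends g → g ∈ t) : G.degree v = ∑ g ∈ t, G.incidence v g :=
  (Finset.sum_subset t.subset_univ fun g _ hg => incidence_of_notMem (mt (ht g) hg)).symm

theorem sum_degree_eq [Fintype V] (S : Set V) [DecidablePred (· ∈ S)] :
    ∑ v ∈ S.toFinset, G.degree v = (G.inc S).ncard + (G.edgesWithin S).ncard := by
  classical
  have hedge (g : E) : ∑ v ∈ S.toFinset, G.incidence v g
      = (if g ∈ G.inc S then 1 else 0) + (if g ∈ G.edgesWithin S then 1 else 0) := by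
    obtain ⟨u, w, h⟩ := exists_ends_eq (G := G) g
    simp only [incidence_of_ends h, Finset.sum_add_distrib, Finset.sum_ite_eq',
      Set.mem_toFinset, mem_inc_iff_of_ends h, mem_edgesWithin_iff_of_ends h]
    by_cases hu : u ∈ S <;> by_cases hw : w ∈ S <;> simp [hu, hw]
  simp only [degree_eq_sum_incidence]
  rw [Finset.sum_comm, Finset.sum_congr rfl fun g _ => hedge g, Finset.sum_add_distrib,
    Finset.sum_boole, Finset.sum_boole, Set.ncard_eq_toFinset_card', Set.ncard_eq_toFinset_card']
  simp

theorem Trivalent.existsUnique_incident_ne (h3 : G.Trivalent) {v : V} {a b : E} (hab : a ≠ b)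
    (ha : v ∈ G.ends a) (hb : v ∈ G.ends b) (ha' : G.ends a ≠ s(v, v))
    (hb' : G.ends b ≠ s(v, v)) : ∃! g, v ∈ G.ends g ∧ g ≠ a ∧ g ≠ b := by
  classical
  have ha₁ := incidence_of_not_loop ha ha'
  have hb₁ := incidence_of_not_loop hb hb'
  refine existsUnique_of_exists_of_unique ?_ ?_
  · by_contra! h
    have := degree_eq_sum_incidence_of_subset (G := G) (v := v) (t := {a, b}) fun g hg => by
      by_cases hga : g = a
      · simp [hga]
      · simp [h g hg hga]
    rw [Finset.sum_pair hab, ha₁, hb₁, h3 v] at this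
    omega
  · rintro g₁ g₂ ⟨h₁, h₁a, h₁b⟩ ⟨h₂, h₂a, h₂b⟩
    by_contra h₁₂
    have := sum_incidence_le_degree (G := G) v {g₁, g₂, a, b}
    rw [Finset.sum_insert (by simp [*]), Finset.sum_insert (by simp [*]), Finset.sum_pair hab,
      ha₁, hb₁, h3 v] at this
    have := one_le_incidence h₁
    have := one_le_incidence h₂
    omega

theorem Trivalent.existsUnique_incident_ne_loop (h3 : G.Trivalent) {v : V} {a : E}
    (ha : G.ends a = s(v, v)) : ∃! g, v ∈ G.ends g ∧ g ≠ a := by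
  classical
  refine existsUnique_of_exists_of_unique ?_ ?_
  · by_contra! h
    have := degree_eq_sum_incidence_of_subset (G := G) (v := v) (t := {a}) fun g hg => by
      simp [h g hg]
    rw [Finset.sum_singleton, incidence_of_loop ha, h3 v] at this
    omega
  · rintro g₁ g₂ ⟨h₁, h₁a⟩ ⟨h₂, h₂a⟩
    by_contra h₁₂
    have := sum_incidence_le_degree (G := G) v {g₁, g₂, a}
    rw [Finset.sum_insert (by simp [*]), Finset.sum_pair h₂a, incidence_of_loop ha, h3 v] at this
    have := one_le_incidence h₁
    have := one_le_incidence h₂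
    omega

theorem Trivalent.exists_bridge_of_loop (h3 : G.Trivalent) {v w : V} {a : E}
    (ha : G.ends a = s(v, v)) (hw : w ≠ v) : ∃ g, G.numComponentsEdges {g}ᶜ ≠ 1 := by
  obtain ⟨g, -, huniq⟩ := h3.existsUnique_incident_ne_loop ha
  refine ⟨g, numComponentsEdges_ne_one (S := {v}) (Set.singleton_nonempty v) ⟨w, hw⟩ ?_⟩
  rintro h hhg x y hxy (rfl : x = v)
  obtain rfl : h = a := by
    by_contra hha
    exact hhg (huniq h ⟨hxy ▸ Sym2.mem_mk_left x y, hha⟩)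
  exact Sym2.congr_right.mp (hxy.symm.trans ha)

variable [Fintype V]

theorem Trivalent.ncard_inc_add_ncard_edgesWithin (h3 : G.Trivalent) (S : Set V) :
    (G.inc S).ncard + (G.edgesWithin S).ncard = 3 * S.ncard := by
  classical
  rw [← sum_degree_eq, Finset.sum_congr rfl fun v _ => h3 v, Finset.sum_const, smul_eq_mul,
    Set.ncard_eq_toFinset_card', mul_comm]

theorem Trivalent.two_mul_card_edges (h3 : G.Trivalent) : 2 * Nat.card E = 3 * Nat.card V := by
  have hinc : G.inc Set.univ = Set.univ := Set.eq_univ_of_forall fun g => by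
    obtain ⟨u, w, h⟩ := exists_ends_eq (G := G) g
    exact ⟨u, trivial, h ▸ Sym2.mem_mk_left u w⟩
  have hwithin : G.edgesWithin Set.univ = Set.univ := Set.eq_univ_of_forall fun _ _ _ => trivial
  have := h3.ncard_inc_add_ncard_edgesWithin Set.univ
  rw [hinc, hwithin, Set.ncard_univ, Set.ncard_univ] at this
  omega

theorem bondRank_inc_le_iff [Nonempty V] (h3 : G.Trivalent) (hconn : G.Connected) (S : Set V) :
    G.bondRank (G.inc S) ≤ S.ncard ↔
      S.ncard + 1 ≤ (G.edgesWithin S).ncard + G.numComponentsSub Sᶜ := by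
  have hcomp := G.numComponentsEdges_compl_inc S
  have hcompV : G.numComponentsEdges (G.inc S)ᶜ ≤ Nat.card V :=
    Nat.card_le_card_of_surjective _ Quot.mk_surjective
  have hV : 0 < Nat.card V := Nat.card_pos
  have hdeg := h3.ncard_inc_add_ncard_edgesWithin S
  have hconn' : G.numComponentsEdges Set.univ = 1 := hconn
  rw [bondRank, cycleRank, cycleRank, hconn']
  omega

end Degree

variable (G) in
structure IsCycleEnum {n : ℕ} (f : ZMod n → V) (e : ZMod n → E) : Prop where
  injective_vertex : Injective f
  injective_edge : Injective e
  ends_edge : ∀ i, G.ends (e i) = s(f i, f (i + 1))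

namespace IsCycleEnum

variable {n : ℕ} {f : ZMod n → V} {e : ZMod n → E}

theorem mem_ends_edge_iff (hc : G.IsCycleEnum f e) {i j : ZMod n} :
    f i ∈ G.ends (e j) ↔ j = i ∨ j + 1 = i := by
  rw [hc.ends_edge, Sym2.mem_iff, hc.injective_vertex.eq_iff, hc.injective_vertex.eq_iff, eq_comm,
    @eq_comm _ i]

theorem ends_edge_ne_loop (hc : G.IsCycleEnum f e) (hn : 1 < n) (i : ZMod n) (v : V) :
    G.ends (e i) ≠ s(v, v) := by
  have : Nontrivial (ZMod n) := ZMod.nontrivial_iff.mpr hn.ne'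
  rw [hc.ends_edge, Ne, Sym2.eq_iff]
  rintro (⟨h₁, h₂⟩ | ⟨h₁, h₂⟩) <;>
    exact (add_eq_left.not.mpr one_ne_zero) (hc.injective_vertex (h₂.trans h₁.symm))

theorem existsUnique_third [Fintype E] (hc : G.IsCycleEnum f e) (h3 : G.Trivalent) (hn : 1 < n)
    (i : ZMod n) : ∃! g, f i ∈ G.ends g ∧ g ∉ Set.range e := by
  have : Nontrivial (ZMod n) := ZMod.nontrivial_iff.mpr hn.ne'
  have hne : e (i - 1) ≠ e i := fun h => by
    simpa using hc.injective_edge h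
  refine (existsUnique_congr fun g => ?_).mp <| h3.existsUnique_incident_ne hne
    (hc.mem_ends_edge_iff.mpr (.inr (sub_add_cancel i 1))) (hc.mem_ends_edge_iff.mpr (.inl rfl))
    (hc.ends_edge_ne_loop hn _ _) (hc.ends_edge_ne_loop hn _ _)
  refine and_congr_right fun hg => ⟨?_, ?_⟩
  · rintro ⟨hga, hgb⟩ ⟨j, rfl⟩
    rcases hc.mem_ends_edge_iff.mp hg with rfl | rfl
    exacts [hgb rfl, hga (by simp)]
  · intro hg
    exact ⟨fun h => hg ⟨_, h.symm⟩, fun h => hg ⟨_, h.symm⟩⟩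

theorem isCycleSet_arc (hc : G.IsCycleEnum f e) {g : E} (hg : g ∉ Set.range e) {i : ZMod n}
    {k : ℕ} (hk : k < n) (hends : G.ends g = s(f (i + k), f i)) :
    G.IsCycleSet (Set.range fun t : Fin (k + 1) => f (i + (t : ℕ))) := by
  have hinj : Injective fun t : Fin (k + 1) => i + (t : ℕ) := fun t₁ t₂ h =>
    Fin.ext (ZMod.natCast_inj_of_lt (add_left_cancel h) (by omega) (by omega))
  refine ⟨k + 1, k.succ_pos, fun t : Fin (k + 1) => f (i + (t : ℕ)),
    hc.injective_vertex.comp hinj, rfl,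
    fun t : Fin (k + 1) => if t = Fin.last k then g else e (i + (t : ℕ)),
    fun (t₁ t₂ : Fin (k + 1)) h => ?_, fun t : Fin (k + 1) => ?_⟩
  · simp only at h
    split_ifs at h with h₁ h₂ h₂
    · exact h₁.trans h₂.symm
    · exact absurd ⟨_, h.symm⟩ hg
    · exact absurd ⟨_, h⟩ hg
    · exact hinj (hc.injective_edge h)
  · change G.ends (if t = Fin.last k then g else e (i + (t : ℕ)))
      = s(f (i + (t : ℕ)), f (i + ((t + 1 : Fin (k + 1)) : ℕ)))
    rw [Fin.val_add_one]
    split_ifs with ht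
    · simp [ht, hends]
    · rw [hc.ends_edge]
      push_cast
      ring_nf

theorem false_of_chord (hc : G.IsCycleEnum f e) (hmin : ∀ B ⊂ Set.range f, ¬ G.IsCycleSet B)
    {g : E} (hg : g ∉ Set.range e) {i : ZMod n} {k : ℕ} (hk : k + 1 < n)
    (hends : G.ends g = s(f (i + k), f i)) : False := by
  refine hmin _ ⟨?_, fun h => ?_⟩ (hc.isCycleSet_arc hg (by omega) hends)
  · rintro _ ⟨t, rfl⟩
    exact ⟨_, rfl⟩
  · obtain ⟨t, ht⟩ := h ⟨i + (k + 1 : ℕ), rfl⟩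
    have := ZMod.natCast_inj_of_lt (add_left_cancel (hc.injective_vertex ht)) (by omega) hk
    omega

/-- In particular, a minimal cycle with an edge off the cycle between two of its vertices has
length at most two. -/
theorem mem_ends_of_chord [NeZero n] (hc : G.IsCycleEnum f e)
    (hmin : ∀ B ⊂ Set.range f, ¬ G.IsCycleSet B) {g : E} (hg : g ∉ Set.range e) {i j : ZMod n}
    (hends : G.ends g = s(f i, f j)) (l : ZMod n) : f l ∈ G.ends g := by
  by_contra hl
  obtain ⟨k, hk, rfl⟩ : ∃ k < n, j = i + k := ⟨(j - i).val, ZMod.val_lt _, by simp⟩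
  obtain ⟨m, hm, rfl⟩ : ∃ m < n, l = i + m := ⟨(l - i).val, ZMod.val_lt _, by simp⟩
  have hm0 : m ≠ 0 := by
    rintro rfl
    exact hl (by simp [hends])
  have hmk : m ≠ k := by
    rintro rfl
    exact hl (by simp [hends])
  rcases lt_or_gt_of_ne hmk with hmk | hkm
  · refine hc.false_of_chord hmin hg (i := i + k) (k := n - k) (by omega) ?_
    have hi : i + k + ((n - k : ℕ) : ZMod n) = i := by
      rw [Nat.cast_sub hk.le, ZMod.natCast_self]
      ring
    rw [hi, hends, Sym2.eq_swap]
  · exact hc.false_of_chord hmin hg (by omega) (hends.trans Sym2.eq_swap)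

theorem edgesWithin_eq_image [NeZero n] (hc : G.IsCycleEnum f e)
    (hmin : ∀ B ⊂ Set.range f, ¬ G.IsCycleSet B) {A' : Set V} (hA' : A' ⊂ Set.range f) :
    G.edgesWithin A' = e '' {i | f i ∈ A' ∧ f (i + 1) ∈ A'} := by
  ext g
  refine ⟨fun hg => ?_, ?_⟩
  · by_cases hge : g ∈ Set.range e
    · obtain ⟨k, rfl⟩ := hge
      exact ⟨k, ⟨hg _ (by simp [hc.ends_edge]), hg _ (by simp [hc.ends_edge])⟩, rfl⟩
    · obtain ⟨u, w, h⟩ := exists_ends_eq (G := G) g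
      obtain ⟨i, rfl⟩ := hA'.subset (hg u (by simp [h]))
      obtain ⟨j, rfl⟩ := hA'.subset (hg w (by simp [h]))
      exact absurd (Set.range_subset_iff.mpr fun l => hg _ (hc.mem_ends_of_chord hmin hge h l))
        hA'.2
  · rintro ⟨i, hi, rfl⟩
    rwa [mem_edgesWithin_iff_of_ends (hc.ends_edge i)]

theorem ncard_eq_ncard_add_ncard [NeZero n] (hc : G.IsCycleEnum f e) {A' : Set V}
    (hA' : A' ⊆ Set.range f) :
    A'.ncard = {i | f i ∈ A' ∧ f (i + 1) ∈ A'}.ncard + {i | f i ∈ A' ∧ f (i + 1) ∉ A'}.ncard := by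
  rw [← Set.ncard_preimage_of_injective_subset_range hc.injective_vertex hA',
    ← Set.ncard_inter_add_ncard_sdiff_eq_ncard (f ⁻¹' A') {i | f (i + 1) ∈ A'}]
  rfl

theorem exists_adj_compl [NeZero n] [Fintype E] (hc : G.IsCycleEnum f e) (h3 : G.Trivalent)
    (hconn : G.Connected) (hmin : ∀ B ⊂ Set.range f, ¬ G.IsCycleSet B) (hn : 1 < n)
    (hAc : (Set.range f)ᶜ.Nonempty) (i : ZMod n) : ∃ w ∉ Set.range f, G.Adj (f i) w := by
  obtain ⟨g, ⟨hgi, hge⟩, -⟩ := hc.existsUnique_third h3 hn i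
  obtain ⟨w, hw⟩ := Sym2.mem_iff_exists.mp hgi
  refine ⟨w, fun ⟨j, hj⟩ => ?_, g, hw⟩
  subst hj
  have hall := hc.mem_ends_of_chord hmin hge hw
  refine numComponentsEdges_ne_one (S := Set.range f) ⟨f i, i, rfl⟩ hAc ?_ hconn
  rintro h - x y hxy ⟨l, rfl⟩
  have hy : y ∈ G.ends h := hxy ▸ Sym2.mem_mk_right _ _
  by_cases hh : h ∈ Set.range e
  · obtain ⟨k, rfl⟩ := hh
    rw [hc.ends_edge, Sym2.mem_iff] at hy
    rcases hy with rfl | rfl <;> exact ⟨_, rfl⟩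
  · obtain rfl : h = g :=
      (hc.existsUnique_third h3 hn l).unique ⟨hxy ▸ Sym2.mem_mk_left _ _, hh⟩ ⟨hall l, hge⟩
    rw [hw, Sym2.mem_iff] at hy
    rcases hy with rfl | rfl <;> exact ⟨_, rfl⟩

theorem numComponentsSub_compl_le_compl_diff [Finite V] [Fintype E] (hc : G.IsCycleEnum f e)
    (h3 : G.Trivalent) (hn : 1 < n) (i : ZMod n) :
    G.numComponentsSub (Set.range f)ᶜ ≤ G.numComponentsSub (Set.range f \ {f i})ᶜ := by
  rw [Set.compl_sdiff, Set.singleton_union]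
  refine numComponentsSub_le_insert ?_
  rintro w₁ hw₁ w₂ hw₂ ⟨g₁, h₁⟩ ⟨g₂, h₂⟩
  have hoff : ∀ g w, w ∉ Set.range f → G.ends g = s(f i, w) → g ∉ Set.range e := by
    rintro g w hw h ⟨j, rfl⟩
    have : w ∈ G.ends (e j) := h ▸ Sym2.mem_mk_right _ _
    rw [hc.ends_edge, Sym2.mem_iff] at this
    rcases this with rfl | rfl <;> exact hw ⟨_, rfl⟩
  obtain rfl : g₁ = g₂ := (hc.existsUnique_third h3 hn i).unique
    ⟨h₁ ▸ Sym2.mem_mk_left _ _, hoff _ _ hw₁ h₁⟩ ⟨h₂ ▸ Sym2.mem_mk_left _ _, hoff _ _ hw₂ h₂⟩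
  exact Sym2.congr_right.mp (h₁.symm.trans h₂)

theorem numComponentsSub_compl_le [NeZero n] (hc : G.IsCycleEnum f e) {A' : Set V}
    (hne : A'.Nonempty) (hA' : A' ⊆ Set.range f)
    (hreach : ∀ x : (A'ᶜ : Set V), ∃ j, ∃ hj : f j ∉ A',
      (Quot.mk _ x : G.Component A'ᶜ) = Quot.mk _ ⟨f j, hj⟩) :
    G.numComponentsSub A'ᶜ ≤ {i | f i ∈ A' ∧ f (i + 1) ∉ A'}.ncard := by
  obtain ⟨_, hi₀⟩ := hne
  obtain ⟨i₀, rfl⟩ := hA' hi₀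
  let c (j : ZMod n) (hj : f j ∉ A') : G.Component A'ᶜ := Quot.mk _ ⟨f j, hj⟩
  have hcstep (j : ZMod n) hj hj' : c j hj = c (j + 1) hj' := Quot.sound ⟨e j, hc.ends_edge j⟩
  rw [numComponentsSub_eq_card, ← Nat.card_coe_set_eq]
  refine Nat.card_le_card_of_surjective
    (fun i : {i | f i ∈ A' ∧ f (i + 1) ∉ A'} => c (i.1 + 1) i.2.2) fun q => ?_
  induction q using Quot.ind with
  | _ x =>
    obtain ⟨j, hj, hx⟩ := hreach x
    obtain ⟨i, hi, hi', h⟩ := ZMod.exists_exit_eq (p := fun i => f i ∈ A') c hcstep hi₀ j hj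
    exact ⟨⟨i, hi, hi'⟩, h.trans hx.symm⟩

theorem exists_component_eq [NeZero n] [Fintype E] (hc : G.IsCycleEnum f e) (h3 : G.Trivalent)
    (hconn : G.Connected) (hmin : ∀ B ⊂ Set.range f, ¬ G.IsCycleSet B) (hn : 1 < n)
    (hA : (Set.range f)ᶜ = ∅ ∨ G.numComponentsSub (Set.range f)ᶜ = 1) {A' : Set V}
    (hA' : A' ⊂ Set.range f) (x : (A'ᶜ : Set V)) :
    ∃ j, ∃ hj : f j ∉ A', (Quot.mk _ x : G.Component A'ᶜ) = Quot.mk _ ⟨f j, hj⟩ := by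
  by_cases hx : x.1 ∈ Set.range f
  · obtain ⟨j, hj⟩ := hx
    exact ⟨j, hj ▸ x.2, congrArg _ (Subtype.ext hj.symm)⟩
  · have hAc : (Set.range f)ᶜ.Nonempty := ⟨x, hx⟩
    have : Subsingleton (G.Component (Set.range f)ᶜ) :=
      (Nat.card_eq_one_iff_unique.mp (hA.resolve_left hAc.ne_empty)).1
    obtain ⟨_, ⟨j, rfl⟩, hj⟩ := Set.exists_of_ssubset hA'
    obtain ⟨w, hw, hadj⟩ := hc.exists_adj_compl h3 hconn hmin hn hAc j
    have hsub : (Set.range f)ᶜ ⊆ A'ᶜ := Set.compl_subset_compl.mpr hA'.subset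
    refine ⟨j, hj, ?_⟩
    exact (component_mk_eq_of_subset hsub (x := ⟨x, hx⟩) (y := ⟨w, hw⟩)
      (Subsingleton.elim _ _)).trans (Quot.sound hadj.symm)

theorem bondRank_inc_range_le [NeZero n] [Fintype V] [Fintype E] (hc : G.IsCycleEnum f e)
    (h3 : G.Trivalent) (hconn : G.Connected)
    (hA : (Set.range f)ᶜ = ∅ ∨ G.numComponentsSub (Set.range f)ᶜ = 1) :
    G.bondRank (G.inc (Set.range f)) ≤ (Set.range f).ncard := by
  have : Nonempty V := ⟨f 0⟩
  have hAn : (Set.range f).ncard = n := by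
    rw [Set.ncard_range_of_injective hc.injective_vertex, Nat.card_zmod]
  rw [bondRank_inc_le_iff h3 hconn]
  rcases hA with hA | hA
  · have hE : G.edgesWithin (Set.range f) = Set.univ := by
      rw [Set.compl_empty_iff.mp hA]
      exact Set.eq_univ_of_forall fun _ _ _ => trivial
    have hV : Nat.card V = n := by
      rw [← hAn, Set.compl_empty_iff.mp hA, Set.ncard_univ]
    have := h3.two_mul_card_edges
    have := NeZero.pos n
    rw [hE, hA, Set.ncard_univ, numComponentsSub_empty]
    omega
  · have hcyc : Set.range e ⊆ G.edgesWithin (Set.range f) := by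
      rintro _ ⟨i, rfl⟩
      rw [mem_edgesWithin_iff_of_ends (hc.ends_edge i)]
      exact ⟨⟨_, rfl⟩, ⟨_, rfl⟩⟩
    have := Set.ncard_le_ncard hcyc
    rw [Set.ncard_range_of_injective hc.injective_edge, Nat.card_zmod] at this
    omega

theorem ncard_lt_bondRank_inc [NeZero n] [Fintype V] [Fintype E] (hc : G.IsCycleEnum f e)
    (h3 : G.Trivalent) (hconn : G.Connected) (hmin : ∀ B ⊂ Set.range f, ¬ G.IsCycleSet B)
    (hA : (Set.range f)ᶜ = ∅ ∨ G.numComponentsSub (Set.range f)ᶜ = 1) {A' : Set V}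
    (hA' : A' ⊂ Set.range f) (hne : A'.Nonempty) : A'.ncard < G.bondRank (G.inc A') := by
  have : Nonempty V := ⟨f 0⟩
  have hn : 1 < n := by
    have := Set.ncard_lt_ncard hA'
    have := (Set.ncard_pos (Set.toFinite A')).mpr hne
    rw [Set.ncard_range_of_injective hc.injective_vertex, Nat.card_zmod] at *
    omega
  have hsplit := hc.ncard_eq_ncard_add_ncard hA'.subset
  have hwithin := Set.ncard_image_of_injective {i | f i ∈ A' ∧ f (i + 1) ∈ A'} hc.injective_edge
  rw [← hc.edgesWithin_eq_image hmin hA'] at hwithin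
  have hcomp := hc.numComponentsSub_compl_le hne hA'.subset
    (hc.exists_component_eq h3 hconn hmin hn hA hA')
  rw [← not_le, bondRank_inc_le_iff h3 hconn]
  omega

theorem bondRank_inc_diff_le [NeZero n] [Fintype V] [Fintype E] (hc : G.IsCycleEnum f e)
    (h3 : G.Trivalent) (hconn : G.Connected) (hmin : ∀ B ⊂ Set.range f, ¬ G.IsCycleSet B)
    (hn : 1 < n) (hω : 2 ≤ G.numComponentsSub (Set.range f)ᶜ) :
    G.bondRank (G.inc (Set.range f \ {f 0})) ≤ (Set.range f \ {f 0}).ncard := by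
  have : Nonempty V := ⟨f 0⟩
  have hA' : Set.range f \ {f 0} ⊂ Set.range f := Set.sdiff_singleton_ssubset.mpr ⟨0, rfl⟩
  have hsplit := hc.ncard_eq_ncard_add_ncard hA'.subset
  have hexit : {i | f i ∈ Set.range f \ {f 0} ∧ f (i + 1) ∉ Set.range f \ {f 0}}.ncard ≤ 1 := by
    refine (Set.ncard_le_ncard (t := {-1}) ?_).trans (Set.ncard_singleton _).le
    rintro i ⟨-, hi⟩
    have : f (i + 1) = f 0 := by simpa using hi
    exact eq_neg_of_add_eq_zero_left (hc.injective_vertex this)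
  have hwithin := Set.ncard_image_of_injective
    {i | f i ∈ Set.range f \ {f 0} ∧ f (i + 1) ∈ Set.range f \ {f 0}} hc.injective_edge
  rw [← hc.edgesWithin_eq_image hmin hA'] at hwithin
  have hcomp := hc.numComponentsSub_compl_le_compl_diff h3 hn 0
  rw [bondRank_inc_le_iff h3 hconn]
  omega

theorem isCircuitMG_of_compl_connected [NeZero n] [Fintype V] [Fintype E]
    (hc : G.IsCycleEnum f e) (h3 : G.Trivalent) (hconn : G.Connected)
    (hmin : ∀ B ⊂ Set.range f, ¬ G.IsCycleSet B)
    (hA : (Set.range f)ᶜ = ∅ ∨ G.numComponentsSub (Set.range f)ᶜ = 1) :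
    G.IsCircuitMG (Set.range f) :=
  ⟨⟨f 0, 0, rfl⟩, hc.bondRank_inc_range_le h3 hconn hA,
    fun _ hA' hne => hc.ncard_lt_bondRank_inc h3 hconn hmin hA hA' hne⟩

theorem compl_connected_of_isCircuitMG [NeZero n] [Fintype V] [Fintype E]
    (hc : G.IsCycleEnum f e) (h3 : G.Trivalent) (h2 : G.TwoEdgeConnected)
    (hmin : ∀ B ⊂ Set.range f, ¬ G.IsCycleSet B) (hC : G.IsCircuitMG (Set.range f)) :
    (Set.range f)ᶜ = ∅ ∨ G.numComponentsSub (Set.range f)ᶜ = 1 := by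
  refine or_iff_not_imp_left.mpr fun hAc => ?_
  obtain ⟨w, hw⟩ := Set.nonempty_iff_ne_empty.mpr hAc
  have hpos : 0 < G.numComponentsSub (Set.range f)ᶜ := by
    have : Nonempty (G.Component (Set.range f)ᶜ) := ⟨Quot.mk _ ⟨w, hw⟩⟩
    rw [numComponentsSub_eq_card]
    exact Nat.card_pos
  by_contra hne
  obtain rfl | hn : n = 1 ∨ 1 < n := by have := NeZero.pos n; omega
  · obtain ⟨g, hg⟩ := h3.exists_bridge_of_loop (hc.ends_edge 0) fun h => hw ⟨0, h.symm⟩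
    exact hg (h2.2 g)
  · have : Nontrivial (ZMod n) := ZMod.nontrivial_iff.mpr hn.ne'
    have hne' : (Set.range f \ {f 0}).Nonempty :=
      ⟨f 1, ⟨1, rfl⟩, fun h => one_ne_zero (hc.injective_vertex h)⟩
    exact (hC.2.2 _ (Set.sdiff_singleton_ssubset.mpr ⟨0, rfl⟩) hne').not_ge
      (hc.bondRank_inc_diff_le h3 h2.1 hmin hn (by omega))

end IsCycleEnum

end Multigraph

/-- For a trivalent 2-edge-connected finite graph `G`, an
inclusion-minimal cycle `A ⊆ V` is a circuit of `M_G` iff removing `A` does not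
disconnect `G`, i.e. `G[V-A]` is connected or empty. -/
theorem minimalCycle_circuit_iff {V E : Type*} [Fintype V] [Fintype E]
    (G : Multigraph V E) (h3 : G.Trivalent) (h2 : G.TwoEdgeConnected)
    (A : Set V) (hA : G.IsCycleSet A)
    (hmin : ∀ B : Set V, B ⊂ A → ¬ G.IsCycleSet B) :
    G.IsCircuitMG A ↔ (Aᶜ = (∅ : Set V) ∨ G.numComponentsSub Aᶜ = 1) := by
  obtain ⟨n, hn, f, hf, rfl, e, he, hee⟩ := hA
  have hc : G.IsCycleEnum f e := ⟨hf, he, hee⟩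
  have : NeZero n := ⟨hn.ne'⟩
  exact ⟨hc.compl_connected_of_isCircuitMG h3 h2 hmin,
    hc.isCircuitMG_of_compl_connected h3 h2.1 hmin⟩
end
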